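/- Let fill : ℕ → ℕ satisfy the ortree invariant. Fix indices p and j with node 2p an ancestor of leaf 2j+1 and 2p ≤ 2j (p as in the LCA computation). Then the iteration: f := 0, a := j - p; while a ≠ 0, s := a AND (-a) (lowest set bit), a := a - s, f := f OR fill(2p + 2a + s); terminates and yields f = ⋁ { fill(t) : t odd, 2p < t < 2j }. -/

import Mathlib

/-- Lowest set bit of `a` (equals `a &&& -a` in two's complement). -/
def lowBit (a : ℕ) : ℕ := a - (a &&& (a - 1))

/-- Bitwise OR of `fill` over all odd indices `t` with `lo < t < hi`. -/
def ortreeOr (fill : ℕ → ℕ) (lo hi : ℕ) : ℕ :=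
  (((List.range hi).filter (fun t => decide (lo < t) && decide (t % 2 = 1))).map fill).foldr
    (· ||| ·) 0

/-- The second loop of `ortree_or_x2`: with the loop variable `a = j - p`,
while `a ≠ 0`, take `s := lowBit a`, set `a := a - s` and or in
`fill (2p + 2a + s)`. Executed with fuel `a`, which suffices for termination. -/
def ortreeLoop2 (fill : ℕ → ℕ) (p : ℕ) : ℕ → ℕ → ℕ
  | 0, _ => 0
  | fuel + 1, a =>
    if a = 0 then 0
    else
      ortreeLoop2 fill p fuel (a - lowBit a) ||| fill (2 * p + 2 * (a - lowBit a) + lowBit a)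

/-!
By induction on `k`, the invariant makes the node `q * 2^(k+1) + 2^k` store the OR of the leaves
strictly between `q * 2^(k+1)` and `(q+1) * 2^(k+1)`. A loop step on `a` with lowest bit `2^k`
ors in the node `2p + 2(a - 2^k) + 2^k`, whose subtree is exactly the block of leaves between
`2p + 2(a - 2^k)` and `2p + 2a`; it is aligned because `2p` is an odd multiple of `2^s` while
`a ≤ j - p < 2^(s-1)`. Splitting the leaf range at these even boundaries, the blocks telescope to
the leaves between `2p` and `2j`.
-/

theorem lowBit_two_mul_add_one (c : ℕ) : lowBit (2 * c + 1) = 1 := by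
  have h := Nat.land_bit true c false c
  simp only [Nat.bit_true, Nat.bit_false, Bool.and_false, Nat.and_self] at h
  simp [lowBit, h]

theorem lowBit_two_mul (a : ℕ) : lowBit (2 * a) = 2 * lowBit a := by
  rcases Nat.eq_zero_or_pos a with rfl | ha
  · rfl
  have h := Nat.land_bit false a true (a - 1)
  simp only [Nat.bit_true, Nat.bit_false, Bool.false_and] at h
  rw [lowBit, lowBit, show 2 * a - 1 = 2 * (a - 1) + 1 by omega, h, Nat.mul_sub]

theorem lowBit_two_pow_mul_odd (k c : ℕ) : lowBit (2 ^ k * (2 * c + 1)) = 2 ^ k := by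
  induction k with
  | zero => simpa using lowBit_two_mul_add_one c
  | succ k ih => rw [pow_succ', mul_assoc, lowBit_two_mul, ih]

theorem exists_lowBit_eq_two_pow {a : ℕ} (ha : a ≠ 0) :
    ∃ k c, lowBit a = 2 ^ k ∧ a = 2 ^ k + 2 ^ (k + 1) * c := by
  obtain ⟨k, _, ⟨c, rfl⟩, rfl⟩ := Nat.exists_eq_two_pow_mul_odd ha
  exact ⟨k, c, lowBit_two_pow_mul_odd k c, by ring⟩

theorem foldr_lor_eq_lor_init (l : List ℕ) (b : ℕ) :
    l.foldr (· ||| ·) b = l.foldr (· ||| ·) 0 ||| b := by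
  induction l with
  | nil => exact (Nat.zero_or b).symm
  | cons x l ih => simp only [List.foldr_cons, ih, Nat.or_assoc]

theorem ortreeOr_succ (fill : ℕ → ℕ) (lo hi : ℕ) :
    ortreeOr fill lo (hi + 1) =
      ortreeOr fill lo hi ||| if lo < hi ∧ hi % 2 = 1 then fill hi else 0 := by
  unfold ortreeOr
  rw [List.range_succ, List.filter_append, List.map_append, List.foldr_append,
    foldr_lor_eq_lor_init]
  by_cases h : lo < hi ∧ hi % 2 = 1 <;> simp [h]

theorem ortreeOr_eq_zero (fill : ℕ → ℕ) {lo hi : ℕ} (h : hi ≤ lo + 1) :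
    ortreeOr fill lo hi = 0 := by
  induction hi with
  | zero => rfl
  | succ hi ih => rw [ortreeOr_succ, ih (by omega), if_neg (by omega), Nat.zero_or]

theorem ortreeOr_two_mul_two_mul_add_two (fill : ℕ → ℕ) (q : ℕ) :
    ortreeOr fill (2 * q) (2 * q + 2) = fill (2 * q + 1) := by
  rw [ortreeOr_succ, ortreeOr_eq_zero fill (by omega), if_pos (by omega), Nat.zero_or]

theorem ortreeOr_split (fill : ℕ → ℕ) {lo mid hi : ℕ} (hlo : lo ≤ mid) (hhi : mid ≤ hi)
    (hmid : mid % 2 = 0) :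
    ortreeOr fill lo hi = ortreeOr fill lo mid ||| ortreeOr fill mid hi := by
  induction hi, hhi using Nat.le_induction with
  | base => rw [ortreeOr_eq_zero fill (Nat.le_succ mid), Nat.or_zero]
  | succ hi hmh ih =>
    have hcond : (lo < hi ∧ hi % 2 = 1) ↔ (mid < hi ∧ hi % 2 = 1) := by omega
    rw [ortreeOr_succ, ortreeOr_succ, ih, Nat.or_assoc, if_congr hcond rfl rfl]

def OrtreeInvariant (fill : ℕ → ℕ) : Prop :=
  ∀ q s, 1 ≤ s →
    fill (q * 2 ^ (s + 1) + 2 ^ s) =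
      fill (q * 2 ^ (s + 1) + 2 ^ s - 2 ^ (s - 1)) ||| fill (q * 2 ^ (s + 1) + 2 ^ s + 2 ^ (s - 1))

section
variable {fill : ℕ → ℕ}

theorem fill_eq_ortreeOr_subtree (hinv : OrtreeInvariant fill) (k q : ℕ) :
    fill (q * 2 ^ (k + 1) + 2 ^ k) =
      ortreeOr fill (q * 2 ^ (k + 1)) (q * 2 ^ (k + 1) + 2 ^ (k + 1)) := by
  induction k generalizing q with
  | zero => simpa [mul_comm] using (ortreeOr_two_mul_two_mul_add_two fill q).symm
  | succ k ih =>
    have hleft : q * 2 ^ (k + 2) + 2 ^ (k + 1) - 2 ^ k = 2 * q * 2 ^ (k + 1) + 2 ^ k := by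
      grind
    have hright : q * 2 ^ (k + 2) + 2 ^ (k + 1) + 2 ^ k = (2 * q + 1) * 2 ^ (k + 1) + 2 ^ k := by
      ring
    have hmid : 2 * q * 2 ^ (k + 1) + 2 ^ (k + 1) = (2 * q + 1) * 2 ^ (k + 1) := by ring
    rw [hinv q (k + 1) (by omega), Nat.add_sub_cancel, hleft, hright, ih, ih, hmid,
      ← ortreeOr_split fill (Nat.mul_le_mul_right _ (by omega)) (Nat.le_add_right _ _)
        (by simp [Nat.mul_mod, Nat.pow_mod])]
    congr 1 <;> ring

theorem ortreeLoop2_eq_ortreeOr (hinv : OrtreeInvariant fill) {p t : ℕ} (hp : 2 ^ t ∣ p)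
    (fuel a : ℕ) (hfuel : a ≤ fuel) (ha : a < 2 ^ t) :
    ortreeLoop2 fill p fuel a = ortreeOr fill (2 * p) (2 * p + 2 * a) := by
  induction fuel generalizing a with
  | zero => rw [Nat.le_zero.1 hfuel, ortreeOr_eq_zero fill (by omega)]; rfl
  | succ fuel ih =>
    rw [ortreeLoop2]
    split_ifs with ha0
    · rw [ha0, ortreeOr_eq_zero fill (by omega)]
    obtain ⟨k, c, hlow, rfl⟩ := exists_lowBit_eq_two_pow ha0
    have hkt : k < t := (Nat.pow_lt_pow_iff_right (by norm_num)).1 (by omega : 2 ^ k < 2 ^ t)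
    obtain ⟨r, rfl⟩ : 2 ^ k ∣ p := (pow_dvd_pow 2 hkt.le).trans hp
    have hnode : 2 * (2 ^ k * r) + 2 * (2 ^ (k + 1) * c) = (r + 2 * c) * 2 ^ (k + 1) := by ring
    have hk : 0 < 2 ^ k := by positivity
    rw [hlow, Nat.add_sub_cancel_left, ih _ (by omega) (by omega), hnode,
      fill_eq_ortreeOr_subtree hinv, ← hnode, ← ortreeOr_split fill (Nat.le_add_right _ _)
        (by omega) (by omega)]
    congr 1
    ring
end

/-- In the interlaced ortree with the invariant that every internal node stores
the OR of its children, if the node `2p` is an ancestor of the leaf `2j+1` with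
`2p ≤ 2j`, then the second loop of `ortree_or_x2` terminates and computes the
OR of `fill` over the odd leaf indices strictly between `2p` and `2j`. -/
theorem ortree_or_second_loop
    (fill : ℕ → ℕ)
    (hinv : ∀ q s, 1 ≤ s →
      fill (q * 2 ^ (s + 1) + 2 ^ s) =
        fill (q * 2 ^ (s + 1) + 2 ^ s - 2 ^ (s - 1)) |||
          fill (q * 2 ^ (s + 1) + 2 ^ s + 2 ^ (s - 1)))
    (p j : ℕ) (hpj : p ≤ j)
    (hanc : ∃ q s, 1 ≤ s ∧ 2 * p = q * 2 ^ (s + 1) + 2 ^ s ∧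
      2 * p - 2 ^ s < 2 * j + 1 ∧ 2 * j + 1 < 2 * p + 2 ^ s) :
    ortreeLoop2 fill p (j - p) (j - p) = ortreeOr fill (2 * p) (2 * j) := by
  obtain ⟨q, s, hs, h2p, -, hj⟩ := hanc
  obtain ⟨t, rfl⟩ : ∃ t, s = t + 1 := ⟨s - 1, by omega⟩
  have hp : p = 2 ^ t * (2 * q + 1) := by
    have : 2 * p = 2 * (2 ^ t * (2 * q + 1)) := by rw [h2p]; ring
    omega
  have hpow : 2 ^ (t + 1) = 2 * 2 ^ t := pow_succ' 2 t
  rw [show 2 * j = 2 * p + 2 * (j - p) by omega]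
  exact ortreeLoop2_eq_ortreeOr hinv ⟨_, hp⟩ _ _ le_rfl (by omega)
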